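/- arXiv:1407.5917 — 4 statements merged into one kernel-verified Lean document; each statement's English description precedes it below -/
import Mathlib

section
/- For every finite set S of at least two points in the Euclidean plane ℝ², there exists a closed disk of minimum radius containing S, and it is unique: there is a closed disk D ⊇ S such that every closed disk containing S has radius at least the radius of D, and any two closed disks containing S whose radius equals this minimum radius have the same center (and hence coincide). -/
/-!
A finite set `S` lies in `closedBall c r` exactly when its farthest-point distance from `c` is at
most `r`. That distance is a continuous function of `c` tending to infinity, so it attains a
minimum: this is the smallest enclosing disk. If two disks of this minimal radius `r` with
distinct centers contained `S`, then by Apollonius's theorem their intersection would lie in the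
disk about the midpoint of the centers of radius `√(r² - (d/2)²) < r`, contradicting minimality.
-/

open EuclideanGeometry Metric Real Set
open scoped RealInnerProductSpace

noncomputable section

/-- The Euclidean plane. -/
abbrev Plane : Type := EuclideanSpace ℝ (Fin 2)

instance : Fact (Module.finrank ℝ Plane = 2) := ⟨finrank_euclideanSpace_fin⟩

/-- `IsSED S c r`: the closed disk centered at `c` with radius `r` contains `S` and
has minimum radius among all closed disks containing `S`
(i.e. it is the smallest enclosing disk of `S`, and `Metric.sphere c r` is `SEC S`). -/
def IsSED (S : Set Plane) (c : Plane) (r : ℝ) : Prop :=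
  0 ≤ r ∧ S ⊆ Metric.closedBall c r ∧
    ∀ (c' : Plane) (r' : ℝ), 0 ≤ r' → S ⊆ Metric.closedBall c' r' → r ≤ r'

/-- The point with coordinates `(x, y)`. -/
def pt (x y : ℝ) : Plane := (WithLp.equiv 2 (Fin 2 → ℝ)).symm ![x, y]

/-- The unit vector at angle `φ`. -/
def unitVec (φ : ℝ) : Plane := pt (Real.cos φ) (Real.sin φ)

/-- A regular `n`-gon, given by its center, its (positive) circumradius and a phase `rot`. -/
structure RegularPolygon (n : ℕ) where
  center : Plane
  radius : ℝ
  radius_pos : 0 < radius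
  rot : ℝ

namespace RegularPolygon

variable {n : ℕ}

/-- The `k`-th vertex, `center + radius • (cos (rot + 2πk/n), sin (rot + 2πk/n))`
(indices act modulo `n`, by periodicity of `cos`/`sin`). -/
def vertex (P : RegularPolygon n) (k : ℕ) : Plane :=
  P.center + P.radius • unitVec (P.rot + 2 * π * k / n)

/-- The edge joining vertex `k` to vertex `k+1` (a closed segment). -/
def edge (P : RegularPolygon n) (k : ℕ) : Set Plane :=
  segment ℝ (P.vertex k) (P.vertex (k + 1))

/-- The relative interior of edge `k` (the open segment). -/
def edgeInt (P : RegularPolygon n) (k : ℕ) : Set Plane :=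
  openSegment ℝ (P.vertex k) (P.vertex (k + 1))

/-- The boundary of the polygon: the union of its edges. -/
def boundary (P : RegularPolygon n) : Set Plane :=
  ⋃ k : Fin n, P.edge k

/-- The vertex set of the polygon. -/
def vertexSet (P : RegularPolygon n) : Set Plane :=
  Set.range fun k : Fin n => P.vertex k

end RegularPolygon

/-- `Supports P S`: the regular `n`-gon `P` is a supporting polygon of `S`: for each pair of
adjacent edges, one of the two edges contains exactly two points of `S` (possibly at its
endpoints) and the relative interior of the other edge contains no point of `S`. -/
def Supports {n : ℕ} (P : RegularPolygon n) (S : Set Plane) : Prop :=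
  ∀ k : ℕ,
    ((S ∩ P.edge k).ncard = 2 ∧ S ∩ P.edgeInt (k + 1) = ∅) ∨
    ((S ∩ P.edge (k + 1)).ncard = 2 ∧ S ∩ P.edgeInt k = ∅)

/-- `S` is Pre-regular: it has a supporting regular `n`-gon. -/
def PreRegular (n : ℕ) (S : Set Plane) : Prop :=
  ∃ P : RegularPolygon n, Supports P S

/-- `x` and `y` are companions w.r.t. `P`: distinct points lying on a common edge of `P`. -/
def Companions {n : ℕ} (P : RegularPolygon n) (x y : Plane) : Prop :=
  x ≠ y ∧ ∃ k : ℕ, x ∈ P.edge k ∧ y ∈ P.edge k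

/-- `p` lies on the ray emanating from `c` with direction `u`. -/
def OnRayFrom (c u p : Plane) : Prop := ∃ t : ℝ, 0 ≤ t ∧ p = c + t • u

/-- `S` is Co-radial w.r.t. `c`: two distinct points of `S` lie on a common ray
emanating from `c`. -/
def Coradial (c : Plane) (S : Set Plane) : Prop :=
  ∃ p ∈ S, ∃ q ∈ S, p ≠ q ∧ ∃ u : Plane, ‖u‖ = 1 ∧ OnRayFrom c u p ∧ OnRayFrom c u q

/-- `S` is a Half-disk set w.r.t. the center `c`: there is a line through `c` such that one of
the two open half-planes bounded by it contains no point of `S`. -/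
def HalfDisk (c : Plane) (S : Set Plane) : Prop :=
  ∃ u : Plane, u ≠ 0 ∧ ∀ p ∈ S, ⟪u, p - c⟫ ≤ 0

/-- The standard orientation of the plane. -/
def stdOrient : Orientation ℝ Plane (Fin 2) :=
  (EuclideanSpace.basisFun (Fin 2) ℝ).toBasis.orientation

/-- The counterclockwise angle from `v` to `w`, a value in `[0, 2π)`. -/
def ccwAngle (v w : Plane) : ℝ :=
  if 0 ≤ (stdOrient.oangle v w).toReal then (stdOrient.oangle v w).toReal
  else (stdOrient.oangle v w).toReal + 2 * π

theorem Set.Finite.exists_minimal_enclosing_closedBall {α : Type*} [PseudoMetricSpace α]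
    [ProperSpace α] {S : Set α} (hfin : S.Finite) (hne : S.Nonempty) :
    ∃ (c : α) (r : ℝ), S ⊆ closedBall c r ∧ ∀ c' r', S ⊆ closedBall c' r' → r ≤ r' := by
  obtain ⟨p₀, hp₀⟩ := hne
  have hs : hfin.toFinset.Nonempty := ⟨p₀, hfin.mem_toFinset.2 hp₀⟩
  set farthest : α → ℝ := fun c => hfin.toFinset.sup' hs (dist · c)
  have subset_iff : ∀ c r, S ⊆ closedBall c r ↔ farthest c ≤ r := by
    intro c r
    simp only [farthest, Finset.sup'_le_iff, Finite.mem_toFinset, subset_def, mem_closedBall]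
  have hcont : Continuous farthest :=
    Continuous.finset_sup'_apply hs fun p _ => continuous_const.dist continuous_id
  have htends : Filter.Tendsto farthest (Filter.cocompact α) Filter.atTop :=
    Filter.tendsto_atTop_mono (fun c => Finset.le_sup' (dist · c) (hfin.mem_toFinset.2 hp₀))
      (tendsto_dist_left_cocompact_atTop p₀)
  have : Nonempty α := ⟨p₀⟩
  obtain ⟨c, hc⟩ := hcont.exists_forall_le htends
  exact ⟨c, farthest c, (subset_iff c _).2 le_rfl,
    fun c' r' h => (hc c').trans ((subset_iff c' r').1 h)⟩

section InnerProductSpace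

variable {E : Type*} [NormedAddCommGroup E] [InnerProductSpace ℝ E]

theorem dist_midpoint_sq_le_of_mem_closedBall {c₁ c₂ p : E} {r : ℝ}
    (h₁ : p ∈ closedBall c₁ r) (h₂ : p ∈ closedBall c₂ r) :
    dist p (midpoint ℝ c₁ c₂) ^ 2 ≤ r ^ 2 - (dist c₁ c₂ / 2) ^ 2 := by
  rw [mem_closedBall] at h₁ h₂
  have apollonius := dist_sq_add_dist_sq_eq_two_mul_dist_midpoint_sq_add_half_dist_sq p c₁ c₂
  nlinarith [pow_le_pow_left₀ dist_nonneg h₁ 2, pow_le_pow_left₀ dist_nonneg h₂ 2]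

theorem closedBall_inter_closedBall_subset_closedBall_midpoint (c₁ c₂ : E) (r : ℝ) :
    closedBall c₁ r ∩ closedBall c₂ r ⊆
      closedBall (midpoint ℝ c₁ c₂) √(r ^ 2 - (dist c₁ c₂ / 2) ^ 2) :=
  fun _ ⟨h₁, h₂⟩ =>
    mem_closedBall.2 (Real.le_sqrt_of_sq_le (dist_midpoint_sq_le_of_mem_closedBall h₁ h₂))

theorem eq_of_subset_closedBall_of_minimal {S : Set E} (hne : S.Nonempty) {r : ℝ}
    (hmin : ∀ (c' : E) (r' : ℝ), 0 ≤ r' → S ⊆ closedBall c' r' → r ≤ r') {c₁ c₂ : E}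
    (h₁ : S ⊆ closedBall c₁ r) (h₂ : S ⊆ closedBall c₂ r) : c₁ = c₂ := by
  obtain ⟨p, hp⟩ := hne
  have hr : 0 ≤ r := dist_nonneg.trans (h₁ hp)
  have hrad : 0 ≤ r ^ 2 - (dist c₁ c₂ / 2) ^ 2 :=
    (sq_nonneg _).trans (dist_midpoint_sq_le_of_mem_closedBall (h₁ hp) (h₂ hp))
  have hle : r ≤ √(r ^ 2 - (dist c₁ c₂ / 2) ^ 2) := hmin _ _ (Real.sqrt_nonneg _)
    ((subset_inter h₁ h₂).trans (closedBall_inter_closedBall_subset_closedBall_midpoint c₁ c₂ r))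
  rw [Real.le_sqrt hr hrad] at hle
  exact dist_le_zero.1 (by nlinarith [dist_nonneg (x := c₁) (y := c₂)])

end InnerProductSpace

/-- For every finite set `S` of at least two points in the plane there is a
closed disk of minimum radius containing `S`, and it is unique: any two closed disks
containing `S` whose radius equals this minimum radius have the same center. -/
theorem smallest_enclosing_disk_exists_unique (S : Set Plane)
    (hfin : S.Finite) (hcard : 2 ≤ S.ncard) :
    ∃ (c : Plane) (r : ℝ), 0 ≤ r ∧ S ⊆ Metric.closedBall c r ∧
      (∀ (c' : Plane) (r' : ℝ), 0 ≤ r' → S ⊆ Metric.closedBall c' r' → r ≤ r') ∧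
      (∀ c₁ c₂ : Plane, S ⊆ Metric.closedBall c₁ r → S ⊆ Metric.closedBall c₂ r →
        c₁ = c₂) := by
  have hne : S.Nonempty := nonempty_of_ncard_ne_zero (by omega)
  obtain ⟨c, r, hsub, hmin⟩ := hfin.exists_minimal_enclosing_closedBall hne
  have hmin' : ∀ (c' : Plane) (r' : ℝ), 0 ≤ r' → S ⊆ closedBall c' r' → r ≤ r' :=
    fun c' r' _ h => hmin c' r' h
  exact ⟨c, r, nonempty_closedBall.1 (hne.mono hsub), hsub, hmin',
    fun _ _ => eq_of_subset_closedBall_of_minimal hne hmin'⟩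
end
end

section
/- Let S be a finite set of at least two points in ℝ², and let the closed disk of center c and radius r be its smallest enclosing disk, i.e., S is contained in this disk and every closed disk containing S has radius at least r. Then c lies in the convex hull of S ∩ SEC(S), where SEC(S) is the circle of center c and radius r. -/
open EuclideanGeometry Metric Real Set
open scoped RealInnerProductSpace

noncomputable section

/-! If `c` were outside the convex hull of the points of `S` on the circle, a hyperplane would
separate these points from `c`. Moving the center a little towards them brings each of them
strictly inside the circle (to first order the squared distance decreases), while the points of
`S` already inside stay inside by continuity; as `S` is finite, a strictly smaller disk then
contains `S`. -/

open Filter Topology InnerProductSpace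

theorem Set.Finite.exists_nonneg_lt_subset_closedBall {X : Type*} [PseudoMetricSpace X]
    {S : Set X} (hS : S.Finite) (hne : S.Nonempty) {x : X} {r : ℝ} (h : S ⊆ ball x r) :
    ∃ r', 0 ≤ r' ∧ r' < r ∧ S ⊆ closedBall x r' := by
  obtain ⟨q, hq, hmax⟩ := Set.exists_max_image S (dist · x) hS hne
  exact ⟨dist q x, dist_nonneg, h hq, hmax⟩

section InnerProductSpace

variable {E : Type*} [NormedAddCommGroup E] [InnerProductSpace ℝ E]

theorem exists_inner_sub_neg_of_notMem_convexHull [CompleteSpace E] {T : Set E}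
    (hT : T.Finite) {c : E} (hc : c ∉ convexHull ℝ T) : ∃ v : E, ∀ p ∈ T, ⟪v, p - c⟫ < 0 := by
  obtain ⟨f, u, hfT, hfc⟩ :=
    geometric_hahn_banach_closed_point (convex_convexHull ℝ T) (hT.isClosed_convexHull ℝ) hc
  refine ⟨(toDual ℝ E).symm f, fun p hp => ?_⟩
  rw [inner_sub_right, toDual_symm_apply, toDual_symm_apply, sub_neg]
  exact (hfT p (subset_convexHull ℝ T hp)).trans hfc

theorem eventually_dist_sub_smul_lt_of_dist_lt {p c : E} {r : ℝ} (v : E) (hp : dist p c < r) :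
    ∀ᶠ t in 𝓝 (0 : ℝ), dist p (c - t • v) < r := by
  have hlim : Tendsto (fun t : ℝ => dist p (c - t • v)) (𝓝 0) (𝓝 (dist p c)) :=
    Continuous.tendsto' (by fun_prop) 0 _ (by simp)
  exact hlim.eventually (gt_mem_nhds hp)

theorem eventually_dist_sub_smul_lt_of_inner_neg {p c v : E} {r : ℝ} (hp : dist p c ≤ r)
    (hv : ⟪v, p - c⟫ < 0) : ∀ᶠ t in 𝓝[>] (0 : ℝ), dist p (c - t • v) < r := by
  have hlim : Tendsto (fun t : ℝ => 2 * ⟪v, p - c⟫ + t * ‖v‖ ^ 2) (𝓝 0) (𝓝 (2 * ⟪v, p - c⟫)) :=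
    Continuous.tendsto' (by fun_prop) 0 _ (by simp)
  have hslope : ∀ᶠ t in 𝓝 (0 : ℝ), 2 * ⟪v, p - c⟫ + t * ‖v‖ ^ 2 < 0 :=
    hlim.eventually (gt_mem_nhds (by linarith))
  filter_upwards [self_mem_nhdsWithin, nhdsWithin_le_nhds hslope] with t (ht : 0 < t) hslope_t
  have hexpand : dist p (c - t • v) ^ 2 = dist p c ^ 2 + t * (2 * ⟪v, p - c⟫ + t * ‖v‖ ^ 2) := by
    rw [dist_eq_norm, dist_eq_norm, show p - (c - t • v) = (p - c) + t • v by abel,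
      norm_add_sq_real, real_inner_smul_right, norm_smul, real_inner_comm, Real.norm_eq_abs,
      abs_of_pos ht]
    ring
  have hr : 0 ≤ r := dist_nonneg.trans hp
  refine lt_of_pow_lt_pow_left₀ 2 hr ?_
  rw [hexpand]
  nlinarith [mul_neg_of_pos_of_neg ht hslope_t, dist_nonneg (x := p) (y := c)]

theorem exists_closedBall_radius_lt_of_notMem_convexHull [CompleteSpace E] {S : Set E}
    (hS : S.Finite) (hne : S.Nonempty) {c : E} {r : ℝ} (hsub : S ⊆ closedBall c r)
    (hc : c ∉ convexHull ℝ (S ∩ sphere c r)) :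
    ∃ c' r', 0 ≤ r' ∧ r' < r ∧ S ⊆ closedBall c' r' := by
  obtain ⟨v, hv⟩ := exists_inner_sub_neg_of_notMem_convexHull (hS.inter_of_left _) hc
  have hmove : ∀ᶠ t in 𝓝[>] (0 : ℝ), ∀ p ∈ S, dist p (c - t • v) < r := by
    refine hS.eventually_all.2 fun p hp => ?_
    rcases (mem_closedBall.1 (hsub hp)).eq_or_lt with hon | hin
    · exact eventually_dist_sub_smul_lt_of_inner_neg (hsub hp) (hv p ⟨hp, hon⟩)
    · exact nhdsWithin_le_nhds (eventually_dist_sub_smul_lt_of_dist_lt v hin)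
  obtain ⟨t, ht⟩ := hmove.exists
  exact ⟨c - t • v, hS.exists_nonneg_lt_subset_closedBall hne ht⟩

end InnerProductSpace

/-- The center of the smallest enclosing disk of a finite set `S` of at least
two points lies in the convex hull of `S ∩ SEC(S)`. -/
theorem sed_center_mem_convexHull (S : Set Plane) (hfin : S.Finite) (hcard : 2 ≤ S.ncard)
    (c : Plane) (r : ℝ) (hsed : IsSED S c r) :
    c ∈ convexHull ℝ (S ∩ Metric.sphere c r) := by
  by_contra hc
  obtain ⟨-, hsub, hmin⟩ := hsed
  have hne : S.Nonempty := Set.nonempty_of_ncard_ne_zero (by omega)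
  obtain ⟨c', r', hr', hlt, hsub'⟩ :=
    exists_closedBall_radius_lt_of_notMem_convexHull hfin hne hsub hc
  exact (hmin c' r' hr' hsub').not_gt hlt
end
end

section
/- Let S be a finite set of at least two points in ℝ², with smallest enclosing disk of center c and radius r. Then every closed half-plane whose boundary line passes through c contains at least one point of S ∩ SEC(S). In particular, if S ∩ SEC(S) consists of exactly two points p and q, then p and q are antipodal on SEC(S): c is the midpoint of the segment pq. -/
open EuclideanGeometry Metric Real Set
open scoped RealInnerProductSpace

noncomputable section

/-! If no point of `S ∩ SEC(S)` lay in the closed half-plane `0 ≤ ⟪u, · - c⟫`, moving the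
center slightly in the direction `-u` would put the finite set `S` strictly inside an open disk of
radius `r`, hence inside a closed disk of smaller radius. For two points `p, q` equidistant from
`c` with midpoint `m ≠ c`, the identity `⟪m - c, p - c⟫ = ‖m - c‖²` shows that the half-plane
with inner normal `c - m` contains neither of them. -/

open Filter Topology

section InnerProductSpace

variable {E : Type*} [NormedAddCommGroup E] [InnerProductSpace ℝ E]

lemma eventually_dist_add_smul_lt_of_dist_lt {p c : E} {r : ℝ} (v : E) (h : dist p c < r) :
    ∀ᶠ ε in 𝓝 (0 : ℝ), dist p (c + ε • v) < r := by
  have hcont : Continuous fun ε : ℝ => dist p (c + ε • v) := by fun_prop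
  exact hcont.continuousAt.eventually_lt continuousAt_const (by simpa using h)

lemma eventually_dist_add_smul_lt_of_inner_pos {p c v : E} (h : 0 < ⟪v, p - c⟫) :
    ∀ᶠ ε in 𝓝[>] (0 : ℝ), dist p (c + ε • v) < dist p c := by
  have hsmall : ∀ᶠ ε in 𝓝 (0 : ℝ), ε * ‖v‖ ^ 2 < 2 * ⟪v, p - c⟫ :=
    (continuous_id.mul continuous_const).continuousAt.eventually_lt continuousAt_const
      (by simpa using h)
  filter_upwards [nhdsWithin_le_nhds hsmall, self_mem_nhdsWithin] with ε hε (hε0 : 0 < ε)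
  have hsq : dist p (c + ε • v) ^ 2 = dist p c ^ 2 - ε * (2 * ⟪v, p - c⟫ - ε * ‖v‖ ^ 2) := by
    rw [dist_eq_norm, dist_eq_norm, show p - (c + ε • v) = (p - c) - ε • v by abel,
      norm_sub_sq_real, real_inner_smul_right, norm_smul, Real.norm_of_nonneg hε0.le,
      real_inner_comm]
    ring
  exact (pow_lt_pow_iff_left₀ dist_nonneg dist_nonneg two_ne_zero).1
    (by rw [hsq]; nlinarith)

lemma Set.Finite.exists_subset_ball_of_forall_inner_pos {S : Set E} (hfin : S.Finite)
    {c v : E} {r : ℝ} (hS : S ⊆ closedBall c r)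
    (hv : ∀ p ∈ S ∩ sphere c r, 0 < ⟪v, p - c⟫) : ∃ c', S ⊆ ball c' r := by
  have hpoint : ∀ p ∈ S, ∀ᶠ ε in 𝓝[>] (0 : ℝ), dist p (c + ε • v) < r := by
    intro p hp
    rcases (mem_closedBall.1 (hS hp)).lt_or_eq with hlt | heq
    · exact nhdsWithin_le_nhds (eventually_dist_add_smul_lt_of_dist_lt v hlt)
    · exact heq ▸ eventually_dist_add_smul_lt_of_inner_pos (hv p ⟨hp, heq⟩)
  obtain ⟨ε, hε⟩ := ((eventually_all_finite hfin).2 hpoint).exists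
  exact ⟨c + ε • v, fun p hp => mem_ball.2 (hε p hp)⟩

lemma inner_midpoint_sub_eq_norm_sq {p q c : E} (h : ‖p - c‖ = ‖q - c‖) :
    ⟪midpoint ℝ p q - c, p - c⟫ = ‖midpoint ℝ p q - c‖ ^ 2 := by
  have hm : midpoint ℝ p q - c = (2⁻¹ : ℝ) • ((p - c) + (q - c)) := by
    rw [midpoint_eq_smul_add, invOf_eq_inv]
    module
  rw [hm, real_inner_smul_left, norm_smul, mul_pow, norm_add_sq_real, inner_add_left,
    real_inner_self_eq_norm_sq, real_inner_comm, h]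
  norm_num
  ring

lemma midpoint_eq_of_forall_exists_inner_nonneg {p q c : E} (hpq : dist p c = dist q c)
    (h : ∀ u : E, u ≠ 0 → ∃ x ∈ ({p, q} : Set E), 0 ≤ ⟪u, x - c⟫) : midpoint ℝ p q = c := by
  by_contra hm
  obtain ⟨x, hx, hux⟩ := h (c - midpoint ℝ p q) (sub_ne_zero.2 (Ne.symm hm))
  have hpos : 0 < ‖midpoint ℝ p q - c‖ ^ 2 := by
    have := norm_pos_iff.2 (sub_ne_zero.2 hm)
    positivity
  rw [dist_eq_norm, dist_eq_norm] at hpq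
  rw [← neg_sub, inner_neg_left] at hux
  rcases hx with rfl | rfl
  · linarith [inner_midpoint_sub_eq_norm_sq (c := c) hpq]
  · rw [midpoint_comm] at hux hpos
    linarith [inner_midpoint_sub_eq_norm_sq (c := c) hpq.symm]

end InnerProductSpace

lemma IsSED.not_subset_ball {S : Set Plane} {c : Plane} {r : ℝ} (hsed : IsSED S c r)
    (hfin : S.Finite) (hne : S.Nonempty) (c' : Plane) : ¬ S ⊆ ball c' r := by
  intro hS
  obtain ⟨r', hr', hS'⟩ := exists_lt_subset_ball hfin.isClosed hS
  obtain ⟨p, hp⟩ := hne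
  exact hr'.not_ge
    (hsed.2.2 c' r' (dist_nonneg.trans (hS' hp).le) (hS'.trans ball_subset_closedBall))

lemma IsSED.exists_mem_sphere_inner_nonneg {S : Set Plane} {c : Plane} {r : ℝ}
    (hsed : IsSED S c r) (hfin : S.Finite) (hne : S.Nonempty) (u : Plane) :
    ∃ p ∈ S ∩ sphere c r, 0 ≤ ⟪u, p - c⟫ := by
  by_contra! h
  obtain ⟨c', hc'⟩ := hfin.exists_subset_ball_of_forall_inner_pos (v := -u) hsed.2.1
    fun p hp => by simpa [inner_neg_left] using h p hp
  exact hsed.not_subset_ball hfin hne c' hc'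

/-- Every closed half-plane whose boundary line passes through the center `c`
of the smallest enclosing disk contains a point of `S ∩ SEC(S)`; in particular if
`S ∩ SEC(S)` consists of exactly two points, they are antipodal. -/
theorem sed_halfplane_and_antipodal (S : Set Plane) (hfin : S.Finite) (hcard : 2 ≤ S.ncard)
    (c : Plane) (r : ℝ) (hsed : IsSED S c r) :
    (∀ u : Plane, u ≠ 0 → ∃ p ∈ S ∩ Metric.sphere c r, 0 ≤ ⟪u, p - c⟫) ∧
    (∀ p q : Plane, p ≠ q → S ∩ Metric.sphere c r = {p, q} → midpoint ℝ p q = c) := by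
  have hne : S.Nonempty := Set.nonempty_of_ncard_ne_zero (by omega)
  have halfplane := fun u (_ : u ≠ 0) => hsed.exists_mem_sphere_inner_nonneg hfin hne u
  refine ⟨halfplane, fun p q _ hpq => ?_⟩
  have hsphere : ({p, q} : Set Plane) ⊆ sphere c r := by rw [← hpq]; exact Set.inter_subset_right
  have hdist : dist p c = dist q c := by
    rw [Metric.mem_sphere.1 (hsphere (Set.mem_insert p {q})),
      Metric.mem_sphere.1 (hsphere (Set.mem_insert_of_mem p (Set.mem_singleton q)))]
  exact midpoint_eq_of_forall_exists_inner_nonneg hdist (hpq ▸ halfplane)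
end
end

section
/- Let a, b, c, d ∈ ℝ² be four pairwise distinct points, no three of which are collinear, forming a convex quadrilateral in this cyclic order (equivalently, the open segments joining a to c and joining b to d intersect). Assume dist(a,b) ≤ dist(b,c), dist(c,d) < dist(d,a), and ∠adb ≥ ∠bdc. Then ∠abc + ∠cda ≤ π. -/
open EuclideanGeometry Metric Real Set
open scoped RealInnerProductSpace

noncomputable section

/-!
Cut the angles at `b` and `d` along the diagonal `bd`: with `α₁ = ∠adb`, `α₂ = ∠bdc`,
`β₁ = ∠abd`, `β₂ = ∠dbc`, the claim says that the remaining angles `γ₁ = ∠dab`, `γ₂ = ∠bcd` of the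
triangles `abd` and `cbd` satisfy `γ₁ + γ₂ ≥ π`. By the law of sines, `ab ≤ bc` and `cd < da` read
`sin α₁ sin γ₂ ≤ sin α₂ sin γ₁` and `sin β₂ sin γ₁ < sin β₁ sin γ₂`. For nonnegative `x, y` with
`x + y < π` we have `sin x ≤ sin y ↔ x ≤ y`. So if `γ₁ + γ₂ < π`, then `α₂ ≤ α₁` gives
`sin γ₂ ≤ sin γ₁`, hence `γ₂ ≤ γ₁`, hence `β₁ ≤ β₂` by the angle sums of the two triangles, and
then `sin β₁ ≤ sin β₂` contradicts the second inequality.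
-/

namespace Real

theorem sin_lt_sin_of_lt_of_add_lt_pi {x y : ℝ} (hx : 0 ≤ x) (hxy : x < y) (hsum : x + y < π) :
    sin x < sin y := by
  have hsin : 0 < sin ((y - x) / 2) := sin_pos_of_pos_of_lt_pi (by linarith) (by linarith)
  have hcos : 0 < cos ((y + x) / 2) := cos_pos_of_mem_Ioo ⟨by linarith, by linarith⟩
  have := sin_sub_sin y x
  nlinarith [mul_pos hsin hcos]

theorem sin_le_sin_iff_of_add_lt_pi {x y : ℝ} (hx : 0 ≤ x) (hy : 0 ≤ y) (hsum : x + y < π) :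
    sin x ≤ sin y ↔ x ≤ y := by
  refine ⟨fun h => not_lt.1 fun hyx => ?_, fun h => ?_⟩
  · exact (sin_lt_sin_of_lt_of_add_lt_pi hy hyx (by linarith)).not_ge h
  · rcases h.eq_or_lt with rfl | hlt
    · exact le_rfl
    · exact (sin_lt_sin_of_lt_of_add_lt_pi hx hlt hsum).le

end Real

theorem pi_le_add_of_sin_mul_sin_le_of_sin_mul_sin_lt {α₁ α₂ β₁ β₂ γ₁ γ₂ : ℝ}
    (hα₁ : 0 < α₁) (hα₂ : 0 ≤ α₂) (hβ₁ : 0 ≤ β₁) (hβ₂ : 0 ≤ β₂) (hγ₁ : 0 ≤ γ₁) (hγ₂ : 0 ≤ γ₂)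
    (h₁ : α₁ + β₁ + γ₁ = π) (h₂ : α₂ + β₂ + γ₂ = π)
    (hα : α₂ ≤ α₁) (hαπ : α₁ + α₂ < π) (hβπ : β₁ + β₂ < π)
    (hsinα : sin α₁ * sin γ₂ ≤ sin α₂ * sin γ₁) (hsinβ : sin β₂ * sin γ₁ < sin β₁ * sin γ₂) :
    π ≤ γ₁ + γ₂ := by
  by_contra! hγπ
  have hsα₁ : 0 < sin α₁ := sin_pos_of_pos_of_lt_pi hα₁ (by linarith)
  have hsβ₁ : 0 ≤ sin β₁ := sin_nonneg_of_nonneg_of_le_pi hβ₁ (by linarith)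
  have hsγ₁ : 0 ≤ sin γ₁ := sin_nonneg_of_nonneg_of_le_pi hγ₁ (by linarith)
  have hα' : sin α₂ ≤ sin α₁ := (sin_le_sin_iff_of_add_lt_pi hα₂ hα₁.le (by linarith)).2 hα
  have hγ' : sin γ₂ ≤ sin γ₁ := by
    refine le_of_mul_le_mul_left ?_ hsα₁
    nlinarith [mul_le_mul_of_nonneg_right hα' hsγ₁]
  have hγ : γ₂ ≤ γ₁ := (sin_le_sin_iff_of_add_lt_pi hγ₂ hγ₁ (by linarith)).1 hγ'
  have hβ' : sin β₁ ≤ sin β₂ := (sin_le_sin_iff_of_add_lt_pi hβ₁ hβ₂ hβπ).2 (by linarith)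
  nlinarith [mul_le_mul_of_nonneg_left hγ' hsβ₁, mul_le_mul_of_nonneg_right hβ' hsγ₁]

theorem sbtw_of_mem_openSegment {E : Type*} [AddCommGroup E] [Module ℝ E] {a b x : E}
    (hx : x ∈ openSegment ℝ a b) (hab : a ≠ b) : Sbtw ℝ a x b :=
  sbtw_iff_mem_image_Ioo_and_ne.2 ⟨openSegment_eq_image_lineMap ℝ a b ▸ hx, hab⟩

section Triangle

variable {V P : Type*} [NormedAddCommGroup V] [InnerProductSpace ℝ V] [MetricSpace P]
  [NormedAddTorsor V P]

theorem angle_add_angle_eq_of_sbtw_of_sbtw {a b c d x : P} (hac : Sbtw ℝ a x c)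
    (hbd : Sbtw ℝ b x d) : ∠ a b d + ∠ d b c = ∠ a b c :=
  angle_add_angle_eq_of_sbtw_of_sameRay hac hbd.wbtw.sameRay_vsub_left hbd.left_ne_right.symm

theorem sin_angle_mul_sin_angle_le_of_dist_le {u v x y : P} (huv : u ≠ v)
    (h : dist u x ≤ dist u y) :
    sin (∠ x v u) * sin (∠ u y v) ≤ sin (∠ y v u) * sin (∠ u x v) := by
  have hx := law_sin x v u
  have hy := law_sin y v u
  have hsin : 0 ≤ sin (∠ u x v) * sin (∠ u y v) :=
    mul_nonneg (sin_nonneg_of_nonneg_of_le_pi (angle_nonneg ..) (angle_le_pi ..))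
      (sin_nonneg_of_nonneg_of_le_pi (angle_nonneg ..) (angle_le_pi ..))
  refine le_of_mul_le_mul_right ?_ (dist_pos.2 huv.symm)
  calc sin (∠ x v u) * sin (∠ u y v) * dist v u
      = sin (∠ u x v) * sin (∠ u y v) * dist u x := by linear_combination sin (∠ u y v) * hx
    _ ≤ sin (∠ u x v) * sin (∠ u y v) * dist u y := mul_le_mul_of_nonneg_left h hsin
    _ = sin (∠ y v u) * sin (∠ u x v) * dist v u := by linear_combination -sin (∠ u x v) * hy

theorem sin_angle_mul_sin_angle_lt_of_dist_lt {u v x y : P}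
    (hx : ¬ Collinear ℝ ({u, x, v} : Set P)) (hy : ¬ Collinear ℝ ({u, y, v} : Set P))
    (h : dist u x < dist u y) :
    sin (∠ x v u) * sin (∠ u y v) < sin (∠ y v u) * sin (∠ u x v) := by
  have hxl := law_sin x v u
  have hyl := law_sin y v u
  have hsin : 0 < sin (∠ u x v) * sin (∠ u y v) :=
    mul_pos (sin_pos_of_not_collinear hx) (sin_pos_of_not_collinear hy)
  refine lt_of_mul_lt_mul_right ?_ dist_nonneg (a := dist v u)
  calc sin (∠ x v u) * sin (∠ u y v) * dist v u
      = sin (∠ u x v) * sin (∠ u y v) * dist u x := by linear_combination sin (∠ u y v) * hxl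
    _ < sin (∠ u x v) * sin (∠ u y v) * dist u y := mul_lt_mul_of_pos_left h hsin
    _ = sin (∠ y v u) * sin (∠ u x v) * dist v u := by linear_combination -sin (∠ u x v) * hyl

theorem angle_add_angle_add_angle_add_angle_le_pi {a b c d : P}
    (habd : ¬ Collinear ℝ ({a, b, d} : Set P)) (hbcd : ¬ Collinear ℝ ({b, c, d} : Set P))
    (hab : dist b a ≤ dist b c) (hcd : dist d c < dist d a) (hang : ∠ b d c ≤ ∠ a d b)
    (hd : ∠ a d b + ∠ b d c < π) (hb : ∠ a b d + ∠ d b c < π) :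
    ∠ a b d + ∠ d b c + (∠ a d b + ∠ b d c) ≤ π := by
  have hdab : ¬ Collinear ℝ ({d, a, b} : Set P) := by
    rwa [Set.insert_comm d a, Set.pair_comm d b]
  have hdcb : ¬ Collinear ℝ ({d, c, b} : Set P) := by
    rwa [Set.insert_comm d c, Set.pair_comm d b, Set.insert_comm c b]
  have hadb : ¬ Collinear ℝ ({a, d, b} : Set P) := by rwa [Set.pair_comm d b]
  have hsinα := sin_angle_mul_sin_angle_le_of_dist_le (ne₂₃_of_not_collinear habd) hab
  have hsinβ := sin_angle_mul_sin_angle_lt_of_dist_lt hdcb hdab hcd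
  rw [angle_comm b c d, angle_comm c d b, angle_comm b a d] at hsinα
  rw [angle_comm c b d] at hsinβ
  have htri_a := angle_add_angle_add_angle_eq_pi a (ne₂₃_of_not_collinear habd).symm
  have htri_c := angle_add_angle_add_angle_eq_pi c (ne₂₃_of_not_collinear habd).symm
  rw [angle_comm b d a] at htri_a
  rw [angle_comm c b d] at htri_c
  have hγ := pi_le_add_of_sin_mul_sin_le_of_sin_mul_sin_lt (angle_pos_of_not_collinear hadb)
    (angle_nonneg ..) (angle_nonneg ..) (angle_nonneg ..) (angle_nonneg ..) (angle_nonneg ..)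
    (by linarith) (by linarith) hang hd hb hsinα hsinβ
  linarith

end Triangle

theorem convex_quadrilateral_angle_sum_general (a b c d : Plane)
    (hac : a ≠ c) (hbd : b ≠ d)
    (habc : ¬ Collinear ℝ ({a, b, c} : Set Plane))
    (habd : ¬ Collinear ℝ ({a, b, d} : Set Plane))
    (hacd : ¬ Collinear ℝ ({a, c, d} : Set Plane))
    (hbcd : ¬ Collinear ℝ ({b, c, d} : Set Plane))
    (hconv : (openSegment ℝ a c ∩ openSegment ℝ b d).Nonempty)
    (hd1 : dist a b ≤ dist b c) (hd2 : dist c d < dist d a)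
    (hang : ∠ b d c ≤ ∠ a d b) :
    ∠ a b c + ∠ c d a ≤ π := by
  obtain ⟨x, hxac, hxbd⟩ := hconv
  have haxc := sbtw_of_mem_openSegment hxac hac
  have hbxd := sbtw_of_mem_openSegment hxbd hbd
  have hsum_b := angle_add_angle_eq_of_sbtw_of_sbtw haxc hbxd
  have hsum_d := angle_add_angle_eq_of_sbtw_of_sbtw haxc hbxd.symm
  have hadc : ¬ Collinear ℝ ({a, d, c} : Set Plane) := by rwa [Set.pair_comm d c]
  rw [← hsum_b, angle_comm c d a, ← hsum_d]
  exact angle_add_angle_add_angle_add_angle_le_pi habd hbcd (by rwa [dist_comm b a])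
    (by rwa [dist_comm d c]) hang (hsum_d ▸ angle_lt_pi_of_not_collinear hadc)
    (hsum_b ▸ angle_lt_pi_of_not_collinear habc)

/-- Let `a b c d` be four pairwise distinct points, no three collinear, forming
a convex quadrilateral in this cyclic order (the open diagonals meet). If `ab ≤ bc`,
`cd < da` and `∠adb ≥ ∠bdc`, then `∠abc + ∠cda ≤ π`. -/
theorem convex_quadrilateral_angle_sum (a b c d : Plane)
    (hab : a ≠ b) (hac : a ≠ c) (had : a ≠ d) (hbc : b ≠ c) (hbd : b ≠ d) (hcd : c ≠ d)
    (habc : ¬ Collinear ℝ ({a, b, c} : Set Plane))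
    (habd : ¬ Collinear ℝ ({a, b, d} : Set Plane))
    (hacd : ¬ Collinear ℝ ({a, c, d} : Set Plane))
    (hbcd : ¬ Collinear ℝ ({b, c, d} : Set Plane))
    (hconv : (openSegment ℝ a c ∩ openSegment ℝ b d).Nonempty)
    (hd1 : dist a b ≤ dist b c) (hd2 : dist c d < dist d a)
    (hang : ∠ b d c ≤ ∠ a d b) :
    ∠ a b c + ∠ c d a ≤ π :=
  convex_quadrilateral_angle_sum_general a b c d hac hbd habc habd hacd hbcd hconv hd1 hd2 hang
end
end
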